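/- arXiv:1811.05943 — 2 statements merged into one kernel-verified Lean document; each statement's English description precedes it below -/
import Mathlib

section
/- Let E(t) = (1/2)∫_S (u_t² + u_x² + β u_xx² + u_xxx²) dx for a smooth periodic solution u of u_tt - u_xx + β u_xxxx - u_xxxxxx = -K·Gu_t on S, where (Gv)(x) = g(x)(v(x) - ∫_S g(y)v(y)dy) with ∫_S g ds = 1 and K > 0. Then E(T) - E(0) = -K ∫_0^T ∫_S g(x)(u_t(x,t) - ∫_S g(s)u_t(s,t) ds)² dx dt for every T > 0; in particular, if g ≥ 0 then E is nonincreasing. -/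
open Real MeasureTheory intervalIntegral

/-- `n`-th spatial derivative of `u(x,t)` in `x`. -/
noncomputable def pd (n : ℕ) (u : ℝ → ℝ → ℝ) (x t : ℝ) : ℝ :=
  iteratedDeriv n (fun y => u y t) x

/-- `n`-th time derivative of `u(x,t)` in `t`. -/
noncomputable def td (n : ℕ) (u : ℝ → ℝ → ℝ) (x t : ℝ) : ℝ :=
  iteratedDeriv n (fun s => u x s) t

open Set

namespace S9

noncomputable def DX (f : ℝ × ℝ → ℝ) (p : ℝ × ℝ) : ℝ := fderiv ℝ f p (1, 0)
noncomputable def DT (f : ℝ × ℝ → ℝ) (p : ℝ × ℝ) : ℝ := fderiv ℝ f p (0, 1)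

variable {f : ℝ × ℝ → ℝ}

lemma contDiff_dir (hf : ContDiff ℝ (⊤ : ℕ∞) f) (v : ℝ × ℝ) :
    ContDiff ℝ (⊤ : ℕ∞) (fun p => fderiv ℝ f p v) :=
  (ContinuousLinearMap.apply ℝ ℝ v).contDiff.comp (hf.fderiv_right (by simp))

lemma contDiff_DX (hf : ContDiff ℝ (⊤ : ℕ∞) f) : ContDiff ℝ (⊤ : ℕ∞) (DX f) := contDiff_dir hf _
lemma contDiff_DT (hf : ContDiff ℝ (⊤ : ℕ∞) f) : ContDiff ℝ (⊤ : ℕ∞) (DT f) := contDiff_dir hf _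
lemma contDiff_DXn (hf : ContDiff ℝ (⊤ : ℕ∞) f) (n : ℕ) : ContDiff ℝ (⊤ : ℕ∞) (DX^[n] f) := by
  induction n with
  | zero => exact hf
  | succ k ih => rw [Function.iterate_succ_apply']; exact contDiff_DX ih

lemma hasDerivAt_DX (hf : ContDiff ℝ (⊤ : ℕ∞) f) (x t : ℝ) :
    HasDerivAt (fun y => f (y, t)) (DX f (x, t)) x := by
  have h1 : HasDerivAt (fun y : ℝ => (y, t)) ((1:ℝ), (0:ℝ)) x := by
    simpa using (hasDerivAt_id x).prodMk (hasDerivAt_const x t)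
  exact (hf.differentiable (by simp) (x, t)).hasFDerivAt.comp_hasDerivAt x h1

lemma hasDerivAt_DT (hf : ContDiff ℝ (⊤ : ℕ∞) f) (x t : ℝ) :
    HasDerivAt (fun s => f (x, s)) (DT f (x, t)) t := by
  have h1 : HasDerivAt (fun s : ℝ => (x, s)) ((0:ℝ), (1:ℝ)) t := by
    simpa using (hasDerivAt_const t x).prodMk (hasDerivAt_id t)
  exact (hf.differentiable (by simp) (x, t)).hasFDerivAt.comp_hasDerivAt t h1

lemma swap_core (hf : ContDiff ℝ (⊤ : ℕ∞) f) (p v w : ℝ × ℝ) :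
    fderiv ℝ (fun q => fderiv ℝ f q v) p w = fderiv ℝ (fun q => fderiv ℝ f q w) p v := by
  have hdf : Differentiable ℝ (fderiv ℝ f) := (hf.fderiv_right (m := 1) (WithTop.coe_le_coe.mpr le_top)).differentiable (by simp)
  have key : ∀ z : ℝ × ℝ, HasFDerivAt (fun q => fderiv ℝ f q z)
      ((ContinuousLinearMap.apply ℝ ℝ z).comp (fderiv ℝ (fderiv ℝ f) p)) p := fun z =>
    ((ContinuousLinearMap.apply ℝ ℝ z).hasFDerivAt).comp p (hdf p).hasFDerivAt
  rw [(key v).fderiv, (key w).fderiv]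
  exact second_derivative_symmetric (fun y => (hf.differentiable (by simp) y).hasFDerivAt)
    (hdf p).hasFDerivAt w v

lemma DT_DX (hf : ContDiff ℝ (⊤ : ℕ∞) f) : DT (DX f) = DX (DT f) := by
  funext p; exact swap_core hf p (1, 0) (0, 1)

lemma DT_DXn (hf : ContDiff ℝ (⊤ : ℕ∞) f) (n : ℕ) : DT (DX^[n] f) = DX^[n] (DT f) := by
  induction n with
  | zero => rfl
  | succ k ih =>
      rw [Function.iterate_succ_apply', DT_DX (contDiff_DXn hf k), ih]
      exact (Function.iterate_succ_apply' DX k (DT f)).symm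

lemma iteratedDeriv_eq (hf : ContDiff ℝ (⊤ : ℕ∞) f) (n : ℕ) (x t : ℝ) :
    iteratedDeriv n (fun y => f (y, t)) x = DX^[n] f (x, t) := by
  induction n generalizing x with
  | zero => simp
  | succ k ih =>
      rw [iteratedDeriv_succ]
      have : iteratedDeriv k (fun y => f (y, t)) = fun y => DX^[k] f (y, t) :=
        funext fun y => ih y
      rw [this, Function.iterate_succ_apply']
      exact (hasDerivAt_DX (contDiff_DXn hf k) x t).deriv

lemma hasDerivAt_param_integral (Φ Ψ : ℝ × ℝ → ℝ) (hΦ : Continuous Φ) (hΨ : Continuous Ψ)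
    (hd : ∀ x t, HasDerivAt (fun s => Φ (x, s)) (Ψ (x, t)) t) (a b t₀ : ℝ) :
    HasDerivAt (fun t => ∫ x in a..b, Φ (x, t)) (∫ x in a..b, Ψ (x, t₀)) t₀ := by
  have slice : ∀ (h : ℝ × ℝ → ℝ), Continuous h → ∀ t : ℝ, Continuous fun x => h (x, t) :=
    fun h hc t => hc.comp (continuous_id.prodMk continuous_const)
  obtain ⟨C, hC⟩ := ((isCompact_uIcc (a := a) (b := b)).prod
    (isCompact_Icc (a := t₀ - 1) (b := t₀ + 1))).exists_bound_of_continuousOn hΨ.continuousOn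
  refine (intervalIntegral.hasDerivAt_integral_of_dominated_loc_of_deriv_le
    (F := fun t x => Φ (x, t)) (F' := fun t x => Ψ (x, t)) (bound := fun _ => C)
    (Metric.ball_mem_nhds t₀ one_pos) ?_ ?_ ?_ ?_ ?_ ?_).2
  · exact Filter.Eventually.of_forall fun t => ((slice _ hΦ t)).aestronglyMeasurable
  · exact ((slice _ hΦ t₀)).intervalIntegrable _ _
  · exact ((slice _ hΨ t₀)).aestronglyMeasurable
  · refine MeasureTheory.ae_of_all _ fun x hx t ht => hC (x, t) ⟨uIoc_subset_uIcc hx, ?_⟩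
    rw [Metric.mem_ball, Real.dist_eq, abs_sub_lt_iff] at ht
    exact ⟨by linarith [ht.1, ht.2], by linarith [ht.1, ht.2]⟩
  · exact intervalIntegrable_const
  · exact MeasureTheory.ae_of_all _ fun x _ t _ => hd x t

end S9

open S9

/-- For a smooth periodic solution `u` of the linear damped equation
`u_tt - u_xx + β u_xxxx - u_xxxxxx = -K·Gu_t` with
`(Gv)(x) = g(x)(v(x) - ∫_S g(y)v(y)dy)`, `∫_S g = 1` and `K > 0`, the energy
`E(t) = (1/2)∫_S (u_t² + u_x² + β u_xx² + u_xxx²) dx` satisfies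
`E(T) - E(0) = -K ∫_0^T ∫_S g(x)(u_t - ∫_S g u_t ds)² dx dt` for every `T > 0`; in
particular, if `g ≥ 0` then `E` is nonincreasing on `[0,∞)`. -/
theorem stmt9 (β : ℝ) (hβ : β = 1 ∨ β = -1) (K : ℝ) (hK : 0 < K)
    (g : ℝ → ℝ) (hg : Continuous g)
    (hmean : ∫ y in (0:ℝ)..(2 * π), g y = 1)
    (G : (ℝ → ℝ) → ℝ → ℝ)
    (hGdef : ∀ h x, G h x = g x * (h x - ∫ y in (0:ℝ)..(2 * π), g y * h y))
    (u : ℝ → ℝ → ℝ)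
    (hsmooth : ContDiff ℝ (⊤ : ℕ∞) (fun p : ℝ × ℝ => u p.1 p.2))
    (hper : ∀ k ≤ 5, ∀ t x : ℝ, pd k u (x + 2 * π) t = pd k u x t)
    (hpde : ∀ x t : ℝ,
      td 2 u x t - pd 2 u x t + β * pd 4 u x t - pd 6 u x t
        = -K * G (fun y => td 1 u y t) x)
    (E : ℝ → ℝ)
    (hE : ∀ t, E t = (1 / 2) * ∫ x in (0:ℝ)..(2 * π),
      (td 1 u x t)^2 + (pd 1 u x t)^2 + β * (pd 2 u x t)^2 + (pd 3 u x t)^2) :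
    (∀ T : ℝ, 0 < T →
      E T - E 0 = -K * ∫ t in (0:ℝ)..T, ∫ x in (0:ℝ)..(2 * π),
        g x * (td 1 u x t - ∫ s in (0:ℝ)..(2 * π), g s * td 1 u s t)^2) ∧
    ((∀ x, 0 ≤ g x) → ∀ t₁ t₂ : ℝ, 0 ≤ t₁ → t₁ ≤ t₂ → E t₂ ≤ E t₁) := by
  set f : ℝ × ℝ → ℝ := fun p => u p.1 p.2 with hfdef
  have hf : ContDiff ℝ (⊤ : ℕ∞) f := hsmooth
  -- translations
  have hpd : ∀ n (x t : ℝ), pd n u x t = DX^[n] f (x, t) := fun n x t =>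
    iteratedDeriv_eq hf n x t
  have htd1 : ∀ x t : ℝ, td 1 u x t = DT f (x, t) := by
    intro x t
    show iteratedDeriv 1 (fun s => u x s) t = _
    rw [iteratedDeriv_one]
    exact (hasDerivAt_DT hf x t).deriv
  have htd2 : ∀ x t : ℝ, td 2 u x t = DT (DT f) (x, t) := by
    intro x t
    show iteratedDeriv 2 (fun s => u x s) t = _
    rw [show (2:ℕ) = 1 + 1 from rfl, iteratedDeriv_succ, iteratedDeriv_one]
    have h1 : deriv (fun s => u x s) = fun s => DT f (x, s) :=
      funext fun s => (hasDerivAt_DT hf x s).deriv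
    rw [h1]
    exact (hasDerivAt_DT (contDiff_DT hf) x t).deriv
  have pi_pos := Real.pi_pos
  -- periodicity
  have hperV : ∀ k, k ≤ 5 → ∀ t x : ℝ, DX^[k] f (x + 2 * π, t) = DX^[k] f (x, t) := by
    intro k hk t x
    rw [← hpd k, ← hpd k]; exact hper k hk t x
  have hperZ : ∀ k, k ≤ 5 → ∀ t x : ℝ,
      DX^[k] (DT f) (x + 2 * π, t) = DX^[k] (DT f) (x, t) := by
    intro k hk t x
    rw [← DT_DXn hf k]
    have h1 : (fun s => DX^[k] f (x + 2 * π, s)) = (fun s => DX^[k] f (x, s)) :=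
      funext fun s => hperV k hk s x
    calc DT (DX^[k] f) (x + 2 * π, t)
        = deriv (fun s => DX^[k] f (x + 2 * π, s)) t :=
          (hasDerivAt_DT (contDiff_DXn hf k) _ t).deriv.symm
      _ = deriv (fun s => DX^[k] f (x, s)) t := by rw [h1]
      _ = DT (DX^[k] f) (x, t) := (hasDerivAt_DT (contDiff_DXn hf k) _ t).deriv
  -- continuity
  have contA : Continuous (DT f) := (contDiff_DT hf).continuous
  have contB : Continuous (DT (DT f)) := (contDiff_DT (contDiff_DT hf)).continuous
  have contV : ∀ k, Continuous (DX^[k] f) := fun k => (contDiff_DXn hf k).continuous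
  have contZ : ∀ k, Continuous (DX^[k] (DT f)) :=
    fun k => (contDiff_DXn (contDiff_DT hf) k).continuous
  have slice : ∀ (h : ℝ × ℝ → ℝ), Continuous h → ∀ t : ℝ, Continuous fun x => h (x, t) :=
    fun h hc t => hc.comp (continuous_id.prodMk continuous_const)
  -- x-derivatives of slices
  have hdxV : ∀ (k : ℕ) (x t : ℝ),
      HasDerivAt (fun y => DX^[k] f (y, t)) (DX^[k+1] f (x, t)) x := by
    intro k x t
    have h := hasDerivAt_DX (contDiff_DXn hf k) x t
    rwa [← Function.iterate_succ_apply' DX k f] at h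
  have hdxZ : ∀ (k : ℕ) (x t : ℝ),
      HasDerivAt (fun y => DX^[k] (DT f) (y, t)) (DX^[k+1] (DT f) (x, t)) x := by
    intro k x t
    have h := hasDerivAt_DX (contDiff_DXn (contDiff_DT hf) k) x t
    rwa [← Function.iterate_succ_apply' DX k (DT f)] at h
  have hdxA : ∀ (x t : ℝ),
      HasDerivAt (fun y => DT f (y, t)) (DX^[1] (DT f) (x, t)) x := fun x t => hdxZ 0 x t
  -- t-derivatives of slices
  have hdtV : ∀ (k : ℕ) (x t : ℝ),
      HasDerivAt (fun s => DX^[k] f (x, s)) (DX^[k] (DT f) (x, t)) t := by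
    intro k x t
    have h := hasDerivAt_DT (contDiff_DXn hf k) x t
    rwa [DT_DXn hf k] at h
  have hdtA : ∀ (x t : ℝ), HasDerivAt (fun s => DT f (x, s)) (DT (DT f) (x, t)) t :=
    fun x t => hasDerivAt_DT (contDiff_DT hf) x t
  -- mean of u_t against g
  set c : ℝ → ℝ := fun t => ∫ s in (0:ℝ)..(2 * π), g s * DT f (s, t) with hcdef
  set D : ℝ → ℝ := fun t => ∫ x in (0:ℝ)..(2 * π), g x * (DT f (x, t) - c t)^2 with hDdef
  have hcint : ∀ t : ℝ, (∫ y in (0:ℝ)..(2 * π), g y * td 1 u y t) = c t := by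
    intro t
    rw [hcdef]
    congr 1
    funext y
    rw [htd1]
  have contc : Continuous c := by
    rw [hcdef]
    exact intervalIntegral.continuous_parametric_intervalIntegral_of_continuous'
      (f := fun t s => g s * DT f (s, t))
      (((hg.comp continuous_snd).mul
        (contA.comp (continuous_snd.prodMk continuous_fst)))) 0 (2 * π)
  have contD : Continuous D := by
    rw [hDdef]
    exact intervalIntegral.continuous_parametric_intervalIntegral_of_continuous'
      (f := fun t x => g x * (DT f (x, t) - c t)^2)
      (by
        show Continuous fun p : ℝ × ℝ => g p.2 * (DT f (p.2, p.1) - c p.1)^2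
        fun_prop) 0 (2 * π)
  -- the PDE in the new variables
  have hb : ∀ x t : ℝ, DT (DT f) (x, t)
      = DX^[2] f (x, t) - β * DX^[4] f (x, t) + DX^[6] f (x, t)
        - K * (g x * (DT f (x, t) - c t)) := by
    intro x t
    have h0 := hpde x t
    rw [hGdef] at h0
    beta_reduce at h0
    rw [htd2, hpd 2, hpd 4, hpd 6, htd1, hcint t] at h0
    linarith
  -- energy density and its time derivative
  set Φ : ℝ × ℝ → ℝ := fun p =>
    (DT f p)^2 + (DX^[1] f p)^2 + β * (DX^[2] f p)^2 + (DX^[3] f p)^2 with hΦdef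
  set Ψ : ℝ × ℝ → ℝ := fun p =>
    2 * (DT (DT f) p * DT f p) + 2 * (DX^[1] (DT f) p * DX^[1] f p)
      + β * (2 * (DX^[2] (DT f) p * DX^[2] f p)) + 2 * (DX^[3] (DT f) p * DX^[3] f p) with hΨdef
  have contΦ : Continuous Φ := by
    rw [hΦdef]
    exact (((contA.pow 2).add ((contV 1).pow 2)).add
      (continuous_const.mul ((contV 2).pow 2))).add ((contV 3).pow 2)
  have contΨ : Continuous Ψ := by
    rw [hΨdef]
    exact (((continuous_const.mul (contB.mul contA)).add
      (continuous_const.mul ((contZ 1).mul (contV 1)))).add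
      (continuous_const.mul (continuous_const.mul ((contZ 2).mul (contV 2))))).add
      (continuous_const.mul ((contZ 3).mul (contV 3)))
  have hdΦ : ∀ x t : ℝ, HasDerivAt (fun s => Φ (x, s)) (Ψ (x, t)) t := by
    intro x t
    simp only [hΦdef, hΨdef]
    have h1 := (hdtA x t).pow 2
    have h2 := (hdtV 1 x t).pow 2
    have h3 := ((hdtV 2 x t).pow 2).const_mul β
    have h4 := (hdtV 3 x t).pow 2
    refine (((h1.add h2).add h3).add h4).congr_deriv ?_
    ring
  have hEfun : E = fun t => (1 / 2) * ∫ x in (0:ℝ)..(2 * π), Φ (x, t) := by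
    funext t
    rw [hE t]
    congr 1
    congr 1
    funext x
    simp only [hΦdef]
    rw [htd1, hpd 1, hpd 2, hpd 3]
  have intg : ∀ (h : ℝ → ℝ), Continuous h → IntervalIntegrable h volume 0 (2 * π) :=
    fun h hc => hc.intervalIntegrable 0 (2 * π)
  -- the key integral identity
  have hPsiInt : ∀ t : ℝ, (∫ x in (0:ℝ)..(2 * π), Ψ (x, t)) = -(2 * K) * D t := by
    intro t
    -- antiderivative in x of the integrand (up to the damping term)
    set W : ℝ → ℝ := fun y =>
      2 * (DT f (y, t) * DX^[1] f (y, t))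
        - (2 * β) * (DT f (y, t) * DX^[3] f (y, t) - DX^[1] (DT f) (y, t) * DX^[2] f (y, t))
        + 2 * (DT f (y, t) * DX^[5] f (y, t) - DX^[1] (DT f) (y, t) * DX^[4] f (y, t)
            + DX^[2] (DT f) (y, t) * DX^[3] f (y, t)) with hWdef
    have hW : ∀ x : ℝ, HasDerivAt W
        (Ψ (x, t) + 2 * K * (g x * (DT f (x, t) * (DT f (x, t) - c t)))) x := by
      intro x
      have hm1 := (hdxA x t).mul (hdxV 1 x t)
      have hm2 := (hdxA x t).mul (hdxV 3 x t)
      have hm3 := (hdxZ 1 x t).mul (hdxV 2 x t)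
      have hm4 := (hdxA x t).mul (hdxV 5 x t)
      have hm5 := (hdxZ 1 x t).mul (hdxV 4 x t)
      have hm6 := (hdxZ 2 x t).mul (hdxV 3 x t)
      have H := ((hm1.const_mul 2).sub ((hm2.sub hm3).const_mul (2 * β))).add
        (((hm4.sub hm5).add hm6).const_mul 2)
      rw [hWdef]
      refine H.congr_deriv ?_
      simp only [hΨdef]
      rw [hb x t]
      ring
    have hperA : ∀ x : ℝ, DT f (x + 2 * π, t) = DT f (x, t) :=
      fun x => hperZ 0 (by norm_num) t x
    have hWper : W (2 * π) = W 0 := by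
      have e0 : (2 * π : ℝ) = 0 + 2 * π := by ring
      rw [e0, hWdef]
      simp only [hperA, hperZ 1 (by norm_num) t, hperZ 2 (by norm_num) t,
        hperV 1 (by norm_num) t, hperV 2 (by norm_num) t, hperV 3 (by norm_num) t,
        hperV 4 (by norm_num) t, hperV 5 (by norm_num) t]
    have contInt : Continuous fun x =>
        Ψ (x, t) + 2 * K * (g x * (DT f (x, t) * (DT f (x, t) - c t))) :=
      (slice _ contΨ t).add (continuous_const.mul (hg.mul ((slice _ contA t).mul
        ((slice _ contA t).sub continuous_const))))
    have key : (∫ x in (0:ℝ)..(2 * π),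
        (Ψ (x, t) + 2 * K * (g x * (DT f (x, t) * (DT f (x, t) - c t)))))
        = W (2 * π) - W 0 :=
      intervalIntegral.integral_eq_sub_of_hasDerivAt (fun x _ => hW x)
        (intg _ contInt)
    rw [hWper, sub_self] at key
    have contDamp : Continuous fun x =>
        2 * K * (g x * (DT f (x, t) * (DT f (x, t) - c t))) :=
      continuous_const.mul (hg.mul ((slice _ contA t).mul
        ((slice _ contA t).sub continuous_const)))
    have hsplit : (∫ x in (0:ℝ)..(2 * π),
          (Ψ (x, t) + 2 * K * (g x * (DT f (x, t) * (DT f (x, t) - c t)))))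
        = (∫ x in (0:ℝ)..(2 * π), Ψ (x, t))
          + ∫ x in (0:ℝ)..(2 * π), 2 * K * (g x * (DT f (x, t) * (DT f (x, t) - c t))) :=
      intervalIntegral.integral_add (intg _ (slice _ contΨ t)) (intg _ contDamp)
    rw [hsplit, intervalIntegral.integral_const_mul] at key
    have hJD : (∫ x in (0:ℝ)..(2 * π), g x * (DT f (x, t) * (DT f (x, t) - c t))) = D t := by
      have e2 : (fun x => g x * (DT f (x, t) - c t)^2)
          = fun x => (g x * (DT f (x, t) * (DT f (x, t) - c t)) - c t * (g x * DT f (x, t)))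
            + (c t * c t) * g x := funext fun x => by ring
      have c1 : Continuous fun x => g x * (DT f (x, t) * (DT f (x, t) - c t)) :=
        hg.mul ((slice _ contA t).mul ((slice _ contA t).sub continuous_const))
      have c2 : Continuous fun x => c t * (g x * DT f (x, t)) :=
        continuous_const.mul (hg.mul (slice _ contA t))
      have c3 : Continuous fun x => (c t * c t) * g x := continuous_const.mul hg
      have hs1 : (∫ x in (0:ℝ)..(2 * π),
            ((g x * (DT f (x, t) * (DT f (x, t) - c t)) - c t * (g x * DT f (x, t)))
              + (c t * c t) * g x))
          = ((∫ x in (0:ℝ)..(2 * π), g x * (DT f (x, t) * (DT f (x, t) - c t)))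
              - ∫ x in (0:ℝ)..(2 * π), c t * (g x * DT f (x, t)))
            + ∫ x in (0:ℝ)..(2 * π), (c t * c t) * g x := by
        rw [intervalIntegral.integral_add ((intg _ c1).sub (intg _ c2)) (intg _ c3),
          intervalIntegral.integral_sub (intg _ c1) (intg _ c2)]
      have hcc : (∫ x in (0:ℝ)..(2 * π), g x * DT f (x, t)) = c t := (congrFun hcdef t).symm
      simp only [hDdef]
      rw [e2, hs1, intervalIntegral.integral_const_mul, intervalIntegral.integral_const_mul,
        hcc, hmean]
      ring
    rw [hJD] at key
    linarith
  -- the derivative of the energy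
  have hEderiv : ∀ t : ℝ, HasDerivAt E (-K * D t) t := by
    intro t
    have hpar := hasDerivAt_param_integral Φ Ψ contΦ contΨ hdΦ 0 (2 * π) t
    have h2 := HasDerivAt.const_mul (1 / 2 : ℝ) hpar
    rw [hEfun]
    refine h2.congr_deriv ?_
    rw [hPsiInt t]
    ring
  constructor
  · intro T hT
    have hft := intervalIntegral.integral_eq_sub_of_hasDerivAt (f := E)
      (f' := fun t => -K * D t) (fun t _ => hEderiv t)
      ((continuous_const.mul contD).intervalIntegrable 0 T)
    rw [intervalIntegral.integral_const_mul] at hft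
    rw [← hft]
    congr 1
    congr 1
    funext t
    simp only [hDdef]
    congr 1
    funext x
    rw [htd1 x t, hcint t]
  · intro hg0 t₁ t₂ _ h12
    have hdiff : Differentiable ℝ E := fun t => (hEderiv t).differentiableAt
    have hd0 : ∀ t, deriv E t ≤ 0 := by
      intro t
      rw [(hEderiv t).deriv]
      have hD0 : 0 ≤ D t := by
        simp only [hDdef]
        apply intervalIntegral.integral_nonneg (by positivity)
        intro x _
        exact mul_nonneg (hg0 x) (sq_nonneg _)
      nlinarith
    exact antitone_of_deriv_nonpos hdiff hd0 h12
end

section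
/- Let a_{nk} = ∫_S G(d_n e^{inx}) e^{-ikx} dx be the Fourier coefficients of G applied to the exponential d_n e^{inx}, where (Gh)(x) = g(x)(h(x) - ∫_S g(y)h(y)dy) and g(x) = Σ_m g_m e^{imx} is smooth with bounded Fourier coefficients, and |d_n| ≤ M. Then there is a constant C (depending on M and s) such that Σ_{k∈ℤ} (1+|k|)^{2s} |a_{nk}|² ≤ C ((1+|n|)^{2s} + |g_{-n}|²) ‖g‖_{H^s}² for every n. -/
open Complex Real MeasureTheory intervalIntegral
open scoped ENNReal NNReal

section helpers

lemma intexp (c : ℤ) : (∫ x in (0:ℝ)..(2*π), Complex.exp ((c:ℂ) * Complex.I * x))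
    = if c = 0 then (2*π:ℂ) else 0 := by
  rcases eq_or_ne c 0 with h | h
  · simp [h]
  · have hc : ((c:ℂ) * Complex.I) ≠ 0 := by simp [Complex.ext_iff, h]
    rw [if_neg h, show (fun x : ℝ => Complex.exp ((c:ℂ) * Complex.I * x)) = fun x : ℝ => Complex.exp (((c:ℂ)*Complex.I) * x) from rfl,
      integral_exp_mul_complex hc]
    have : Complex.exp ((c:ℂ) * Complex.I * (2*π)) = 1 := by
      rw [show (c:ℂ) * Complex.I * (2*π) = c * (2*π*Complex.I) by ring]
      exact Complex.exp_int_mul_two_pi_mul_I c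
    simp [this]

lemma intexp2 (m j : ℤ) : (∫ x in (0:ℝ)..(2*π),
    Complex.exp ((m:ℂ) * Complex.I * x) * Complex.exp (-(j:ℂ) * Complex.I * x))
    = if m = j then (2*π:ℂ) else 0 := by
  have : ∀ x : ℝ, Complex.exp ((m:ℂ) * Complex.I * x) * Complex.exp (-(j:ℂ) * Complex.I * x)
      = Complex.exp (((m - j : ℤ):ℂ) * Complex.I * x) := by
    intro x; rw [← Complex.exp_add]; push_cast; ring_nf
  simp_rw [this, intexp]
  simp [sub_eq_zero]

noncomputable def eint (m : ℤ) (x : ℝ) : ℂ := Complex.exp ((m:ℂ) * Complex.I * x)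

lemma eint_cont (m : ℤ) : Continuous (eint m) := by
  unfold eint; fun_prop

lemma eint_norm (m : ℤ) (x : ℝ) : ‖eint m x‖ = 1 := by
  unfold eint
  rw [show (m:ℂ) * Complex.I * x = ((m * x : ℝ):ℂ) * Complex.I by push_cast; ring]
  exact Complex.norm_exp_ofReal_mul_I _

lemma eint_conj (m : ℤ) (x : ℝ) : (starRingEnd ℂ) (eint m x) = eint (-m) x := by
  unfold eint
  rw [← Complex.exp_conj]
  congr 1
  simp [Complex.ext_iff, Complex.mul_re, Complex.mul_im]

lemma l2norm (c : ℤ → ℂ) (F : Finset ℤ) :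
    (∫ x in (0:ℝ)..(2*π), ‖∑ m ∈ F, c m * eint m x‖^2)
    = 2*π*∑ m ∈ F, ‖c m‖^2 := by
  have key : ∀ x : ℝ, (‖∑ m ∈ F, c m * eint m x‖^2 : ℝ)
      = ((∑ m ∈ F, ∑ j ∈ F, (c m * (starRingEnd ℂ) (c j)) * (eint m x * eint (-j) x)).re) := by
    intro x
    have : (‖∑ m ∈ F, c m * eint m x‖^2 : ℝ)
        = ((∑ m ∈ F, c m * eint m x) * (starRingEnd ℂ) (∑ m ∈ F, c m * eint m x)).re := by
      rw [Complex.mul_conj, ← Complex.sq_norm]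
      simp [← Complex.ofReal_pow]
    rw [this, map_sum, Finset.sum_mul_sum]
    congr 1
    refine Finset.sum_congr rfl fun m _ =>Finset.sum_congr rfl fun j _ => ?_
    rw [map_mul, eint_conj]
    ring
  simp_rw [key]
  have hc : ∀ (m j : ℤ), Continuous (fun x : ℝ => (c m * (starRingEnd ℂ) (c j)) * (eint m x * eint (-j) x)) :=
    fun m j => continuous_const.mul ((eint_cont m).mul (eint_cont (-j)))
  have hint : ∀ (m j : ℤ), IntervalIntegrable
      (fun x => (c m * (starRingEnd ℂ) (c j)) * (eint m x * eint (-j) x)) volume 0 (2*π) :=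
    fun m j => (hc m j).intervalIntegrable 0 (2*π)
  have hcF : Continuous (fun x : ℝ => ∑ m ∈ F, ∑ j ∈ F, (c m * (starRingEnd ℂ) (c j)) * (eint m x * eint (-j) x)) :=
    continuous_finset_sum _ fun m _ => continuous_finset_sum _ fun j _ => hc m j
  have hintF : IntervalIntegrable
      (fun x => ∑ m ∈ F, ∑ j ∈ F, (c m * (starRingEnd ℂ) (c j)) * (eint m x * eint (-j) x))
      volume 0 (2*π) := hcF.intervalIntegrable 0 (2*π)
  rw [show (fun x => (∑ m ∈ F, ∑ j ∈ F, (c m * (starRingEnd ℂ) (c j)) * (eint m x * eint (-j) x)).re)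
      = fun x => Complex.reCLM ((fun y => ∑ m ∈ F, ∑ j ∈ F, (c m * (starRingEnd ℂ) (c j)) * (eint m y * eint (-j) y)) x) from rfl,
    Complex.reCLM.intervalIntegral_comp_comm hintF]
  have hI : (∫ x in (0:ℝ)..(2*π), ∑ m ∈ F, ∑ j ∈ F, (c m * (starRingEnd ℂ) (c j)) * (eint m x * eint (-j) x))
      = ∑ m ∈ F, (c m * (starRingEnd ℂ) (c m)) * (2*π:ℂ) := by
    rw [intervalIntegral.integral_finset_sum (fun m _ => (continuous_finset_sum F (fun j _ => hc m j)).intervalIntegrable 0 (2*π))]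
    refine Finset.sum_congr rfl fun m hm => ?_
    rw [intervalIntegral.integral_finset_sum (fun j _ => hint m j)]
    have h2 : ∀ j ∈ F, (∫ x in (0:ℝ)..(2*π), (c m * (starRingEnd ℂ) (c j)) * (eint m x * eint (-j) x))
        = if m = j then (c m * (starRingEnd ℂ) (c j)) * (2*π:ℂ) else 0 := by
      intro j _
      rw [intervalIntegral.integral_const_mul]
      have h3 := intexp2 m j
      simp only [eint, show ∀ x:ℝ, ((-j:ℤ):ℂ) * Complex.I * x = -(j:ℂ) * Complex.I * x from fun x => by push_cast; ring] at h3 ⊢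
      rw [h3]
      split <;> simp
    rw [Finset.sum_congr rfl h2, Finset.sum_ite_eq F m (fun j => (c m * (starRingEnd ℂ) (c j)) * (2*π:ℂ)), if_pos hm]
  simp only [Complex.reCLM_apply]
  rw [hI, Complex.re_sum, Finset.mul_sum]
  refine Finset.sum_congr rfl fun m _ => ?_
  rw [Complex.mul_conj]
  have h4 : ((Complex.normSq (c m) : ℂ) * (2*(π:ℂ))).re = Complex.normSq (c m) * (2*π) := by
    simp [Complex.mul_re]
  rw [h4, Complex.normSq_eq_norm_sq]
  ring

open Filter Topology

lemma sfun_tendsto (g : ℝ → ℂ) (gc : ℤ → ℂ)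
    (hgc : ∀ x : ℝ, HasSum (fun m : ℤ => gc m * eint m x) (g x))
    (F : Finset ℤ) (x : ℝ) :
    Tendsto (fun M : ℕ => ∑ m ∈ F ∪ Finset.Icc (-(M:ℤ)) M, gc m * eint m x) atTop (𝓝 (g x)) := by
  have hseq : Tendsto (fun M : ℕ => F ∪ Finset.Icc (-(M:ℤ)) M) atTop atTop := by
    apply Filter.tendsto_atTop_finset_of_monotone
    · intro i j hij
      exact Finset.union_subset_union_right (Finset.Icc_subset_Icc (by omega) (by omega))
    · intro x
      exact ⟨x.natAbs, Finset.mem_union_right _ (Finset.mem_Icc.mpr ⟨by omega, by omega⟩)⟩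
  exact (hgc x).comp hseq

lemma l2bound (g : ℝ → ℂ) (hgcont : Continuous g) (gc : ℤ → ℂ)
    (hgc : ∀ x : ℝ, HasSum (fun m : ℤ => gc m * eint m x) (g x))
    (hw : Summable fun m : ℤ => ‖gc m‖^2) (F : Finset ℤ) :
    (∫ x in (0:ℝ)..(2*π), ‖g x - ∑ m ∈ F, gc m * eint m x‖^2)
      ≤ 2*π*∑' (m : {m : ℤ // m ∉ F}), ‖gc m‖^2 := by
  have hpi : (0:ℝ) ≤ 2*π := by positivity
  set μ := volume.restrict (Set.Ioc (0:ℝ) (2*π)) with hμ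
  set w : ℤ → ℝ := fun m => ‖gc m‖^2 with hwdef
  have hwnn : ∀ m, 0 ≤ w m := fun m => sq_nonneg _
  set tail : ℝ := ∑' (m : {m : ℤ // m ∉ F}), w m with htail
  have htailnn : 0 ≤ tail := tsum_nonneg (fun m => hwnn m)
  -- tail as indicator tsum
  have htail_ind : tail = ∑' m : ℤ, Set.indicator {m : ℤ | m ∉ F} w m := by
    rw [htail]
    exact tsum_subtype {m : ℤ | m ∉ F} w
  have hind_sum : Summable (Set.indicator {m : ℤ | m ∉ F} w) :=
    hw.indicator _
  set SF : ℝ → ℂ := fun x => ∑ m ∈ F, gc m * eint m x with hSF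
  have hSFc : Continuous SF := continuous_finset_sum _ fun m _ => continuous_const.mul (eint_cont m)
  have hDc : Continuous (fun x => g x - SF x) := hgcont.sub hSFc
  -- per-M L² identity and bound
  have hM : ∀ M : ℕ, (∫ x, ‖(∑ m ∈ F ∪ Finset.Icc (-(M:ℤ)) M, gc m * eint m x) - SF x‖^2 ∂μ)
      ≤ 2*π*tail := by
    intro M
    set G := F ∪ Finset.Icc (-(M:ℤ)) M with hG
    have hFG : F ⊆ G := Finset.subset_union_left
    have hdiff : ∀ x : ℝ, (∑ m ∈ G, gc m * eint m x) - SF x = ∑ m ∈ G \ F, gc m * eint m x := by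
      intro x
      rw [hSF, ← Finset.sum_sdiff hFG]
      ring
    simp_rw [hdiff]
    rw [← intervalIntegral.integral_of_le hpi, l2norm]
    have : ∑ m ∈ G \ F, ‖gc m‖^2 ≤ tail := by
      rw [htail_ind]
      have : ∑ m ∈ G \ F, ‖gc m‖^2 = ∑ m ∈ G \ F, Set.indicator {m : ℤ | m ∉ F} w m := by
        refine Finset.sum_congr rfl fun m hm => ?_
        rw [Set.indicator_of_mem (by simpa using (Finset.mem_sdiff.mp hm).2)]
      rw [this]
      exact Summable.sum_le_tsum _ (fun m _ => Set.indicator_nonneg (fun m _ => hwnn m) m) hind_sum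
    nlinarith [Real.pi_pos]
  -- Fatou
  have hofreal : ∀ z : ℂ, ENNReal.ofReal (‖z‖^2) = (‖z‖₊ : ℝ≥0∞)^2 := by
    intro z
    rw [ENNReal.ofReal_pow (norm_nonneg _)]; congr 1; exact ENNReal.ofReal_eq_coe_nnreal (norm_nonneg z)
  have key : (∫⁻ x, (‖g x - SF x‖₊ : ℝ≥0∞)^2 ∂μ) ≤ ENNReal.ofReal (2*π*tail) := by
    set f : ℕ → ℝ → ℝ≥0∞ := fun M x =>
      (‖(∑ m ∈ F ∪ Finset.Icc (-(M:ℤ)) M, gc m * eint m x) - SF x‖₊ : ℝ≥0∞)^2 with hf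
    have hcM : ∀ M : ℕ, Continuous fun x =>
        (∑ m ∈ F ∪ Finset.Icc (-(M:ℤ)) M, gc m * eint m x) - SF x :=
      fun M => (continuous_finset_sum _ fun m _ => continuous_const.mul (eint_cont m)).sub hSFc
    have hfm : ∀ M, Measurable (f M) :=
      fun M => ((hcM M).measurable.nnnorm.coe_nnreal_ennreal).pow_const 2
    have hlim : ∀ x, Tendsto (fun M => f M x) atTop (𝓝 ((‖g x - SF x‖₊ : ℝ≥0∞)^2)) := by
      intro x
      have h1 : Tendsto (fun M : ℕ => (∑ m ∈ F ∪ Finset.Icc (-(M:ℤ)) M, gc m * eint m x) - SF x)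
          atTop (𝓝 (g x - SF x)) := (sfun_tendsto g gc hgc F x).sub tendsto_const_nhds
      have h2 : Continuous fun z : ℂ => (‖z‖₊ : ℝ≥0∞)^2 :=
        (ENNReal.continuous_pow 2).comp (ENNReal.continuous_coe.comp continuous_nnnorm)
      exact (h2.tendsto _).comp h1
    calc (∫⁻ x, (‖g x - SF x‖₊ : ℝ≥0∞)^2 ∂μ)
        = ∫⁻ x, liminf (fun M => f M x) atTop ∂μ := by
          refine lintegral_congr fun x => ?_
          exact ((hlim x).liminf_eq).symm
      _ ≤ liminf (fun M => ∫⁻ x, f M x ∂μ) atTop := lintegral_liminf_le hfm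
      _ ≤ ENNReal.ofReal (2*π*tail) := by
          refine liminf_le_of_le ?_ ?_
          · isBoundedDefault
          · intro b hb
            rcases (hb.and (Filter.Eventually.of_forall (fun M => le_refl (0:ℝ≥0∞)))).exists with ⟨M, hM2, -⟩
            refine le_trans hM2 ?_
            have hint : Integrable (fun x => ‖(∑ m ∈ F ∪ Finset.Icc (-(M:ℤ)) M, gc m * eint m x) - SF x‖^2) μ := by
              exact ((hcM M).norm.pow 2).integrableOn_Ioc
            have : (∫⁻ x, f M x ∂μ) = ENNReal.ofReal (∫ x, ‖(∑ m ∈ F ∪ Finset.Icc (-(M:ℤ)) M, gc m * eint m x) - SF x‖^2 ∂μ) := by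
              rw [MeasureTheory.ofReal_integral_eq_lintegral_ofReal hint
                (Filter.Eventually.of_forall fun x => sq_nonneg _)]
              refine lintegral_congr fun x => (hofreal _).symm
            rw [this]
            exact ENNReal.ofReal_le_ofReal (hM M)
  -- convert to Bochner integral
  rw [intervalIntegral.integral_of_le hpi]
  have hnn : 0 ≤ᵐ[μ] fun x => ‖g x - SF x‖^2 := Filter.Eventually.of_forall fun x => sq_nonneg _
  have hmeas : AEStronglyMeasurable (fun x => ‖g x - SF x‖^2) μ :=
    (hDc.norm.pow 2).aestronglyMeasurable
  rw [MeasureTheory.integral_eq_lintegral_of_nonneg_ae hnn hmeas]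
  have heq : (∫⁻ x, ENNReal.ofReal (‖g x - SF x‖^2) ∂μ) = ∫⁻ x, (‖g x - SF x‖₊ : ℝ≥0∞)^2 ∂μ :=
    lintegral_congr fun x => hofreal _
  rw [heq]
  calc (∫⁻ x, (‖g x - SF x‖₊ : ℝ≥0∞)^2 ∂μ).toReal
      ≤ (ENNReal.ofReal (2*π*tail)).toReal := ENNReal.toReal_mono ENNReal.ofReal_ne_top key
    _ = 2*π*tail := ENNReal.toReal_ofReal (by positivity)

lemma coeff_finset (c : ℤ → ℂ) (F : Finset ℤ) (j : ℤ) (hj : j ∈ F) :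
    (∫ x in (0:ℝ)..(2*π), (∑ m ∈ F, c m * eint m x) * eint (-j) x) = 2*π*c j := by
  have : ∀ x : ℝ, (∑ m ∈ F, c m * eint m x) * eint (-j) x
      = ∑ m ∈ F, c m * (eint m x * eint (-j) x) := by
    intro x; rw [Finset.sum_mul]; exact Finset.sum_congr rfl fun m _ => by ring
  simp_rw [this]
  rw [intervalIntegral.integral_finset_sum (fun m _ =>
    (show IntervalIntegrable (fun x => c m * (eint m x * eint (-j) x)) volume 0 (2*π) from (continuous_const.mul ((eint_cont m).mul (eint_cont (-j)))).intervalIntegrable 0 (2*π)))]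
  have h2 : ∀ m ∈ F, (∫ x in (0:ℝ)..(2*π), c m * (eint m x * eint (-j) x))
      = if m = j then c m * (2*π:ℂ) else 0 := by
    intro m _
    rw [intervalIntegral.integral_const_mul]
    have h3 := intexp2 m j
    simp only [eint, show ∀ x:ℝ, ((-j:ℤ):ℂ) * Complex.I * x = -(j:ℂ) * Complex.I * x from
      fun x => by push_cast; ring] at h3 ⊢
    rw [h3]
    split <;> simp
  rw [Finset.sum_congr rfl h2, Finset.sum_ite_eq' F j (fun m => c m * (2*π:ℂ)), if_pos hj]
  push_cast
  ring

lemma fourier_eq (g : ℝ → ℂ) (hgcont : Continuous g) (gc : ℤ → ℂ)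
    (hgc : ∀ x : ℝ, HasSum (fun m : ℤ => gc m * eint m x) (g x))
    (hw : Summable fun m : ℤ => ‖gc m‖^2) (j : ℤ) :
    (∫ x in (0:ℝ)..(2*π), g x * eint (-j) x) = 2*π*gc j := by
  have hpi : (0:ℝ) ≤ 2*π := by positivity
  set μ := volume.restrict (Set.Ioc (0:ℝ) (2*π)) with hμ
  haveI : IsFiniteMeasure μ := by
    constructor
    rw [hμ, Measure.restrict_apply_univ, Real.volume_Ioc]
    exact ENNReal.ofReal_lt_top
  set w : ℤ → ℝ := fun m => ‖gc m‖^2 with hwdef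
  set A := (∫ x in (0:ℝ)..(2*π), g x * eint (-j) x) - 2*π*gc j with hA
  set FN : ℕ → Finset ℤ := fun N => insert j (Finset.Icc (-(N:ℤ)) N) with hFN
  set tail : ℕ → ℝ := fun N => ∑' (m : {m : ℤ // m ∉ FN N}), w m with htail
  have htailnn : ∀ N, 0 ≤ tail N := fun N => tsum_nonneg (fun m => sq_nonneg _)
  -- the per-N bound
  have hbd : ∀ N : ℕ, ‖A‖ ≤ Real.sqrt (2*π*tail N) * Real.sqrt (2*π) := by
    intro N
    set F := FN N with hF
    have hjF : j ∈ F := Finset.mem_insert_self j _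
    set SF : ℝ → ℂ := fun x => ∑ m ∈ F, gc m * eint m x with hSF
    have hSFc : Continuous SF := continuous_finset_sum _ fun m _ => continuous_const.mul (eint_cont m)
    have hDc : Continuous (fun x => g x - SF x) := hgcont.sub hSFc
    have hAeq : A = ∫ x in (0:ℝ)..(2*π), (g x - SF x) * eint (-j) x := by
      have : ∀ x : ℝ, (g x - SF x) * eint (-j) x = g x * eint (-j) x - SF x * eint (-j) x :=
        fun x => by ring
      simp_rw [this]
      rw [intervalIntegral.integral_sub
        (show IntervalIntegrable (fun x => g x * eint (-j) x) volume 0 (2*π) from (hgcont.mul (eint_cont (-j))).intervalIntegrable 0 (2*π))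
        (show IntervalIntegrable (fun x => SF x * eint (-j) x) volume 0 (2*π) from (hSFc.mul (eint_cont (-j))).intervalIntegrable 0 (2*π)),
        coeff_finset gc F j hjF, hA]
    have h3 : ‖A‖ ≤ ∫ x in (0:ℝ)..(2*π), ‖g x - SF x‖ := by
      rw [hAeq]
      refine le_trans (intervalIntegral.norm_integral_le_integral_norm hpi) ?_
      refine le_of_eq (intervalIntegral.integral_congr fun x _ => ?_)
      rw [norm_mul, eint_norm, mul_one]
    -- Cauchy-Schwarz
    obtain ⟨C, hC⟩ : ∃ C, ∀ x ∈ Set.Icc (0:ℝ) (2*π), ‖g x - SF x‖ ≤ C :=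
      isCompact_Icc.exists_bound_of_continuousOn hDc.continuousOn
    have hmem : MemLp (fun x => g x - SF x) (ENNReal.ofReal 2) μ := by
      refine MemLp.of_bound hDc.aestronglyMeasurable C ?_
      filter_upwards [ae_restrict_mem measurableSet_Ioc] with x hx
      exact hC x (Set.Ioc_subset_Icc_self hx)
    have hone : MemLp (fun _ : ℝ => (1:ℂ)) (ENNReal.ofReal 2) μ := memLp_const 1
    have hpq : Real.HolderConjugate 2 2 := Real.HolderConjugate.two_two
    have hCS := MeasureTheory.integral_mul_norm_le_Lp_mul_Lq (μ := μ) hpq hmem hone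
    have h4 : (∫ x in (0:ℝ)..(2*π), ‖g x - SF x‖) = ∫ x, ‖g x - SF x‖ * ‖(1:ℂ)‖ ∂μ := by
      rw [intervalIntegral.integral_of_le hpi]
      exact integral_congr_ae (Filter.Eventually.of_forall fun x => by simp)
    have h5 : (∫ x, ‖g x - SF x‖ ^ (2:ℝ) ∂μ) ≤ 2*π*tail N := by
      have : ∀ x : ℝ, ‖g x - SF x‖ ^ (2:ℝ) = ‖g x - SF x‖ ^ (2:ℕ) := fun x =>
        by rw [show (2:ℝ) = ((2:ℕ):ℝ) by norm_num, Real.rpow_natCast]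
      simp_rw [this]
      rw [← intervalIntegral.integral_of_le hpi]
      exact l2bound g hgcont gc hgc hw F
    have h6 : (∫ x, ‖(1:ℂ)‖ ^ (2:ℝ) ∂μ) = 2*π := by
      simp only [norm_one, Real.one_rpow]
      rw [MeasureTheory.integral_const, smul_eq_mul, mul_one, measureReal_def, Measure.restrict_apply_univ, Real.volume_Ioc,
        sub_zero, ENNReal.toReal_ofReal hpi]
    have h7 : 0 ≤ ∫ x, ‖g x - SF x‖ ^ (2:ℝ) ∂μ :=
      integral_nonneg fun x => Real.rpow_nonneg (norm_nonneg _) _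
    calc ‖A‖ ≤ ∫ x, ‖g x - SF x‖ * ‖(1:ℂ)‖ ∂μ := by rw [← h4]; exact h3
      _ ≤ (∫ x, ‖g x - SF x‖ ^ (2:ℝ) ∂μ) ^ ((1:ℝ)/2) * (∫ x, ‖(1:ℂ)‖ ^ (2:ℝ) ∂μ) ^ ((1:ℝ)/2) := hCS
      _ ≤ (2*π*tail N) ^ ((1:ℝ)/2) * (2*π) ^ ((1:ℝ)/2) := by
          rw [h6]
          exact mul_le_mul_of_nonneg_right (Real.rpow_le_rpow h7 h5 (by norm_num))
            (Real.rpow_nonneg hpi _)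
      _ = Real.sqrt (2*π*tail N) * Real.sqrt (2*π) := by
          rw [Real.sqrt_eq_rpow, Real.sqrt_eq_rpow]
  -- the limit
  have htail0 : Filter.Tendsto tail Filter.atTop (nhds 0) := by
    have hFtend : Filter.Tendsto FN Filter.atTop Filter.atTop := by
      apply Filter.tendsto_atTop_finset_of_monotone
      · intro i k hik
        exact Finset.insert_subset_insert _ (Finset.Icc_subset_Icc (by omega) (by omega))
      · intro x
        exact ⟨x.natAbs, Finset.mem_insert_of_mem (Finset.mem_Icc.mpr ⟨by omega, by omega⟩)⟩
    exact (tendsto_tsum_compl_atTop_zero w).comp hFtend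
  have hB0 : Filter.Tendsto (fun N => Real.sqrt (2*π*tail N) * Real.sqrt (2*π))
      Filter.atTop (nhds 0) := by
    have h1 : Filter.Tendsto (fun N => 2*π*tail N) Filter.atTop (nhds 0) := by
      have := htail0.const_mul (2*π)
      simpa using this
    have h2 : Filter.Tendsto (fun N => Real.sqrt (2*π*tail N)) Filter.atTop (nhds 0) := by
      have := (Real.continuous_sqrt.tendsto 0).comp h1
      simpa [Function.comp_def] using this
    have := h2.mul_const (Real.sqrt (2*π))
    simpa using this
  have : ‖A‖ ≤ 0 := le_of_tendsto_of_tendsto' tendsto_const_nhds hB0 hbd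
  have hA0 : A = 0 := by
    rwa [← norm_le_zero_iff]
  rw [hA] at hA0
  exact sub_eq_zero.mp hA0

end helpers

/-- let `a_{nk} = ∫_S G(d_n e^{inx}) e^{-ikx} dx` where
`(Gh)(x) = g(x)(h(x) - ∫_S g(y)h(y)dy)`, `g = Σ_m g_m e^{imx}` is smooth with mean
value 1 and `|d_n| ≤ M`.  Then there is a constant `C` (depending on `M` and `s`) such
that `Σ_k (1+|k|)^{2s}|a_{nk}|² ≤ C((1+|n|)^{2s} + |g_{-n}|²)‖g‖_{H^s}²` for every `n`. -/
theorem stmt19 (s : ℝ) (hs : 0 ≤ s)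
    (g : ℝ → ℂ) (hg : ContDiff ℝ (⊤ : ℕ∞) g)
    (gc : ℤ → ℂ)
    (hgc : ∀ x : ℝ, HasSum (fun m : ℤ => gc m * Complex.exp ((m : ℂ) * Complex.I * x)) (g x))
    (hgcb : ∃ K : ℝ, ∀ m : ℤ, ‖gc m‖ ≤ K)
    (hgH : Summable fun m : ℤ => (1 + |(m : ℝ)|) ^ (2 * s) * ‖gc m‖^2)
    (hmean : (∫ x in (0:ℝ)..(2 * π), g x) = 2 * π)
    (G : (ℝ → ℂ) → ℝ → ℂ)
    (hG : ∀ h x, G h x = g x * (h x - ∫ y in (0:ℝ)..(2 * π), g y * h y))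
    (M : ℝ) (hM : 0 < M) (d : ℤ → ℂ) (hd : ∀ n, ‖d n‖ ≤ M)
    (a : ℤ → ℤ → ℂ)
    (ha : ∀ n k : ℤ, a n k = ∫ x in (0:ℝ)..(2 * π),
      G (fun y => d n * Complex.exp ((n : ℂ) * Complex.I * y)) x *
        Complex.exp (-(k : ℂ) * Complex.I * x)) :
    ∃ C : ℝ, 0 < C ∧ ∀ n : ℤ,
      ∑' k : ℤ, (1 + |(k : ℝ)|) ^ (2 * s) * ‖a n k‖^2
        ≤ C * ((1 + |(n : ℝ)|) ^ (2 * s) + ‖gc (-n)‖^2) *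
            ∑' m : ℤ, (1 + |(m : ℝ)|) ^ (2 * s) * ‖gc m‖^2 := by
  have hπ := Real.pi_pos
  have hgcont : Continuous g := hg.continuous
  have hone_le : ∀ m : ℤ, (1:ℝ) ≤ (1 + |(m : ℝ)|) ^ (2 * s) := by
    intro m
    calc (1:ℝ) = 1 ^ (2*s) := (Real.one_rpow _).symm
      _ ≤ (1 + |(m : ℝ)|) ^ (2 * s) :=
        Real.rpow_le_rpow (by norm_num) (by simp [abs_nonneg]) (by linarith)
  have hw : Summable fun m : ℤ => ‖gc m‖^2 := by
    refine Summable.of_nonneg_of_le (fun m => sq_nonneg _) (fun m => ?_) hgH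
    nlinarith [hone_le m, sq_nonneg ‖gc m‖]
  have hgc' : ∀ x : ℝ, HasSum (fun m : ℤ => gc m * eint m x) (g x) := fun x => hgc x
  have hco : ∀ j : ℤ, (∫ x in (0:ℝ)..(2*π), g x * Complex.exp (-(j:ℂ) * Complex.I * x))
      = 2*π*gc j := by
    intro j
    have h := fourier_eq g hgcont gc hgc' hw j
    simp only [eint, show ∀ x : ℝ, ((-j:ℤ):ℂ) * Complex.I * x = -(j:ℂ) * Complex.I * x from
      fun x => by push_cast; ring] at h
    exact h
  -- closed formula for a n k
  have haf : ∀ n k : ℤ, a n k = 2*π*d n * (gc (k - n) - 2*π*gc (-n) * gc k) := by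
    intro n k
    rw [ha n k]
    have hinner : (∫ y in (0:ℝ)..(2*π), g y * (d n * Complex.exp ((n:ℂ) * Complex.I * y)))
        = d n * (2*π*gc (-n)) := by
      have h1 : ∀ y : ℝ, g y * (d n * Complex.exp ((n:ℂ) * Complex.I * y))
          = d n * (g y * Complex.exp (-((-n:ℤ):ℂ) * Complex.I * y)) := by
        intro y
        have : -((-n:ℤ):ℂ) = (n:ℂ) := by push_cast; ring
        rw [this]; ring
      simp_rw [h1]
      rw [intervalIntegral.integral_const_mul, hco (-n)]
    simp only [hG, hinner]
    have hsplit : ∀ x : ℝ,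
        g x * (d n * Complex.exp ((n:ℂ) * Complex.I * x) - d n * (2*π*gc (-n)))
          * Complex.exp (-(k:ℂ) * Complex.I * x)
        = d n * (g x * Complex.exp (-((k - n:ℤ):ℂ) * Complex.I * x))
          - (d n * (2*π*gc (-n))) * (g x * Complex.exp (-(k:ℂ) * Complex.I * x)) := by
      intro x
      have hexp : Complex.exp ((n:ℂ) * Complex.I * x) * Complex.exp (-(k:ℂ) * Complex.I * x)
          = Complex.exp (-((k - n:ℤ):ℂ) * Complex.I * x) := by
        rw [← Complex.exp_add]; congr 1; push_cast; ring
      rw [← hexp]; ring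
    simp_rw [hsplit]
    have hc1 : Continuous fun x : ℝ => g x * Complex.exp (-((k - n:ℤ):ℂ) * Complex.I * x) := by
      fun_prop
    have hc2 : Continuous fun x : ℝ => g x * Complex.exp (-(k:ℂ) * Complex.I * x) := by
      fun_prop
    rw [intervalIntegral.integral_sub (show IntervalIntegrable (fun x => d n * (g x * Complex.exp (-((k - n:ℤ):ℂ) * Complex.I * x))) volume 0 (2*π) from (continuous_const.mul hc1).intervalIntegrable 0 (2*π))
      (show IntervalIntegrable (fun x => (d n * (2*π*gc (-n))) * (g x * Complex.exp (-(k:ℂ) * Complex.I * x))) volume 0 (2*π) from (continuous_const.mul hc2).intervalIntegrable 0 (2*π)),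
      intervalIntegral.integral_const_mul, intervalIntegral.integral_const_mul,
      hco (k - n), hco k]
    ring
  -- norm bound
  have hbound : ∀ n k : ℤ, ‖a n k‖^2
      ≤ 8*π^2*M^2 * (‖gc (k - n)‖^2 + 4*π^2 * (‖gc (-n)‖^2 * ‖gc k‖^2)) := by
    intro n k
    rw [haf n k]
    set u := ‖gc (k - n)‖ with hu'
    set v := ‖gc (-n)‖ with hv'
    set t := ‖gc k‖ with ht'
    set Z := ‖gc (k - n) - 2*π*gc (-n) * gc k‖ with hZ'
    have hu : (0:ℝ) ≤ u := norm_nonneg _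
    have hv : (0:ℝ) ≤ v := norm_nonneg _
    have ht : (0:ℝ) ≤ t := norm_nonneg _
    have hZ : (0:ℝ) ≤ Z := norm_nonneg _
    have hdn := hd n
    have hdnn : (0:ℝ) ≤ ‖d n‖ := norm_nonneg _
    have h1 : ‖(2:ℂ)*(π:ℂ)*d n * (gc (k - n) - 2*π*gc (-n) * gc k)‖ = 2*π*‖d n‖*Z := by
      simp [norm_mul, Complex.norm_real, abs_of_pos hπ, hZ']
      try ring
    have h2 : Z ≤ u + 2*π*(v*t) := by
      refine le_trans (norm_sub_le _ _) ?_
      have : ‖(2:ℂ)*(π:ℂ)*gc (-n) * gc k‖ = 2*π*(v*t) := by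
        simp [norm_mul, Complex.norm_real, abs_of_pos hπ, hv', ht']
        try ring
      rw [this]
    have hZ3 : Z^2 ≤ 2*u^2 + 8*π^2*(v*t)^2 := by
      nlinarith [mul_le_mul h2 h2 hZ (by positivity : (0:ℝ) ≤ u + 2*π*(v*t)),
        sq_nonneg (u - 2*π*(v*t))]
    calc ‖(2:ℂ)*(π:ℂ)*d n * (gc (k - n) - 2*π*gc (-n) * gc k)‖^2
        = 4*π^2 * ‖d n‖^2 * Z^2 := by rw [h1]; ring
      _ ≤ 4*π^2 * M^2 * Z^2 := by
          have hDn2 : ‖d n‖^2 ≤ M^2 := by nlinarith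
          nlinarith [mul_le_mul_of_nonneg_left (mul_le_mul_of_nonneg_right hDn2 (sq_nonneg Z))
            (by positivity : (0:ℝ) ≤ 4*π^2)]
      _ ≤ 4*π^2*M^2 * (2*u^2 + 8*π^2*(v*t)^2) :=
          mul_le_mul_of_nonneg_left hZ3 (by positivity)
      _ = 8*π^2*M^2 * (u^2 + 4*π^2 * (v^2 * t^2)) := by ring
  set T := ∑' m : ℤ, (1 + |(m : ℝ)|) ^ (2 * s) * ‖gc m‖^2 with hT
  have hTnn : 0 ≤ T :=
    tsum_nonneg fun m => mul_nonneg (Real.rpow_nonneg (by positivity) _) (sq_nonneg _)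
  refine ⟨8*π^2*M^2*(1+4*π^2), by positivity, fun n => ?_⟩
  set P := (1 + |(n : ℝ)|) ^ (2*s) with hP
  have hPnn : 0 ≤ P := Real.rpow_nonneg (by positivity) _
  have hkey : ∀ k : ℤ, (1 + |(k:ℝ)|) ^ (2*s) ≤ P * (1 + |((k - n : ℤ):ℝ)|) ^ (2*s) := by
    intro k
    rw [hP, ← Real.mul_rpow (by positivity) (by positivity)]
    refine Real.rpow_le_rpow (by positivity) ?_ (by linarith)
    have h1 : |(k:ℝ)| ≤ |(n:ℝ)| + |((k - n : ℤ):ℝ)| := by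
      have : (k:ℝ) = (n:ℝ) + ((k - n : ℤ):ℝ) := by push_cast; ring
      rw [this]
      exact abs_add_le _ _
    nlinarith [abs_nonneg ((n:ℝ)), abs_nonneg (((k - n : ℤ):ℝ))]
  set f1 : ℤ → ℝ := fun k => (1 + |((k - n : ℤ):ℝ)|)^(2*s) * ‖gc (k - n)‖^2 with hf1
  have hsf1 : Summable f1 :=
    ((Equiv.subRight n).summable_iff
      (f := fun m : ℤ => (1 + |(m:ℝ)|)^(2*s) * ‖gc m‖^2)).mpr hgH
  set b : ℤ → ℝ := fun k => 8*π^2*M^2 *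
    (P * f1 k + (4*π^2*‖gc (-n)‖^2) * ((1 + |(k:ℝ)|)^(2*s) * ‖gc k‖^2)) with hb
  have hsb : Summable b := ((hsf1.mul_left P).add (hgH.mul_left _)).mul_left _
  have hble : ∀ k : ℤ, (1 + |(k:ℝ)|)^(2*s) * ‖a n k‖^2 ≤ b k := by
    intro k
    have h1 : (1 + |(k:ℝ)|)^(2*s) * ‖a n k‖^2
        ≤ (1 + |(k:ℝ)|)^(2*s) * (8*π^2*M^2 * (‖gc (k - n)‖^2 + 4*π^2 * (‖gc (-n)‖^2 * ‖gc k‖^2))) :=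
      mul_le_mul_of_nonneg_left (hbound n k) (Real.rpow_nonneg (by positivity) _)
    refine le_trans h1 ?_
    have h2 : (1 + |(k:ℝ)|)^(2*s) * ‖gc (k - n)‖^2 ≤ P * f1 k := by
      rw [hf1]
      calc (1 + |(k:ℝ)|)^(2*s) * ‖gc (k - n)‖^2
          ≤ (P * (1 + |((k - n : ℤ):ℝ)|)^(2*s)) * ‖gc (k - n)‖^2 :=
            mul_le_mul_of_nonneg_right (hkey k) (sq_nonneg _)
        _ = P * ((1 + |((k - n : ℤ):ℝ)|)^(2*s) * ‖gc (k - n)‖^2) := by ring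
    simp only [hb]
    nlinarith [mul_le_mul_of_nonneg_left h2 (by positivity : (0:ℝ) ≤ 8*π^2*M^2)]
  have hsa : Summable (fun k : ℤ => (1 + |(k:ℝ)|)^(2*s) * ‖a n k‖^2) :=
    Summable.of_nonneg_of_le
      (fun k => mul_nonneg (Real.rpow_nonneg (by positivity) _) (sq_nonneg _)) hble hsb
  refine le_trans (Summable.tsum_le_tsum hble hsa hsb) ?_
  have hf1T : ∑' k, f1 k = T := by
    rw [hT, hf1]
    exact (Equiv.subRight n).tsum_eq (fun m : ℤ => (1 + |(m:ℝ)|)^(2*s) * ‖gc m‖^2)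
  have htb : ∑' k, b k = 8*π^2*M^2 * (P * T + (4*π^2*‖gc (-n)‖^2) * T) := by
    rw [hb, tsum_mul_left, Summable.tsum_add (hsf1.mul_left P) (hgH.mul_left _),
      tsum_mul_left, tsum_mul_left, hf1T, ← hT]
  rw [htb]
  have hv2 : (0:ℝ) ≤ ‖gc (-n)‖^2 := sq_nonneg _
  have hexp : 8*π^2*M^2*(1+4*π^2) * (P + ‖gc (-n)‖^2) * T
      = 8*π^2*M^2 * (P * T + (4*π^2*‖gc (-n)‖^2) * T)
        + 8*π^2*M^2 * (4*π^2*(P*T) + ‖gc (-n)‖^2*T) := by ring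
  have hnn : (0:ℝ) ≤ 8*π^2*M^2 * (4*π^2*(P*T) + ‖gc (-n)‖^2*T) :=
    mul_nonneg (by positivity)
      (add_nonneg (mul_nonneg (by positivity) (mul_nonneg hPnn hTnn)) (mul_nonneg hv2 hTnn))
  linarith
end
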